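/- Let n ≥ 1 and let π be a permutation of {1, …, n+1}. For every i ∈ {1, …, n}, the number of j ∈ {1, …, n} such that (i,j) is a box for π is odd (in particular it is at least 1). -/

import Mathlib

/-- `(i,j)` is a box for the permutation `π` with inverse `σ`:
`min(π i, π (i+1)) ≤ j < max(π i, π (i+1))` and `min(σ j, σ (j+1)) ≤ i < max(σ j, σ (j+1))`. -/
def IsBox (π σ : ℕ → ℕ) (i j : ℕ) : Prop :=
  min (π i) (π (i+1)) ≤ j ∧ j < max (π i) (π (i+1)) ∧
  min (σ j) (σ (j+1)) ≤ i ∧ i < max (σ j) (σ (j+1))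

instance (π σ : ℕ → ℕ) (i j : ℕ) : Decidable (IsBox π σ i j) := by
  unfold IsBox; infer_instance

/-- A box `(i,j)` is windmilled if exactly one of `π i > j` and `σ j > i` holds. -/
def Windmilled (π σ : ℕ → ℕ) (i j : ℕ) : Prop :=
  IsBox π σ i j ∧ Xor (j < π i) (i < σ j)

instance (π σ : ℕ → ℕ) (i j : ℕ) : Decidable (Windmilled π σ i j) := by
  unfold Windmilled; infer_instance

/-- The matrix `A(π)`: `-1` on windmilled boxes, `1` on non-windmilled boxes, `0` elsewhere. -/
def AMat (π σ : ℕ → ℕ) (i j : ℕ) : ℤ :=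
  if Windmilled π σ i j then -1 else if IsBox π σ i j then 1 else 0

/-- Baxter condition (dividing-line form) for a permutation `π` of `{1, …, n+1}`
with inverse `σ`. -/
def IsBaxter (n : ℕ) (π σ : ℕ → ℕ) : Prop :=
  ∀ i ∈ Finset.Icc 1 n,
    ∃ c, min (π i) (π (i+1)) ≤ c ∧ c < max (π i) (π (i+1)) ∧
      ∀ d, min (π i) (π (i+1)) < d → d < max (π i) (π (i+1)) →
        (π i < π (i+1) → (d ≤ c → σ d < i) ∧ (c < d → σ d > i + 1)) ∧
        (π (i+1) < π i → (d ≤ c → σ d > i + 1) ∧ (c < d → σ d < i))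

/-!
For `j` between `π i` and `π (i+1)`, the pair `(i, j)` is a box exactly when `σ j` and `σ (j+1)`
lie on different sides of `i + 1/2`. Colouring `j` by whether `σ j ≤ i`, the boxes in row `i` are
the colour changes along `[min, max]`; the two endpoints `π i` and `π (i+1)` have different colours
(`σ (π i) = i`, `σ (π (i+1)) = i + 1`), so the number of changes is odd.
-/

open Finset

lemma odd_card_filter_ne_succ_iff (f : ℕ → Bool) {a b : ℕ} (hab : a ≤ b) :
    Odd #{j ∈ Ico a b | f j ≠ f (j + 1)} ↔ f a ≠ f b := by
  induction b, hab using Nat.le_induction with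
  | base => simp
  | succ b hab ih =>
    rw [Nat.Ico_succ_right_eq_insert_Ico hab, filter_insert]
    by_cases hchange : f b ≠ f (b + 1)
    · rw [if_pos hchange, card_insert_of_notMem (by simp), Nat.odd_add_one, ih]
      revert hchange; cases f a <;> cases f b <;> cases f (b + 1) <;> decide
    · rw [if_neg hchange, ih]
      revert hchange; cases f a <;> cases f b <;> cases f (b + 1) <;> decide

lemma isBox_iff {π σ : ℕ → ℕ} (hσ : Function.Injective σ) (i j : ℕ) :
    IsBox π σ i j ↔ j ∈ Ico (min (π i) (π (i + 1))) (max (π i) (π (i + 1))) ∧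
      decide (σ j ≤ i) ≠ decide (σ (j + 1) ≤ i) := by
  have hσj : σ j ≠ σ (j + 1) := fun h => by simpa using hσ h
  simp only [IsBox, mem_Ico, ne_eq, decide_eq_decide]
  omega

lemma apply_min_ne_apply_max {f : ℕ → Bool} {x y : ℕ} (h : f x ≠ f y) : f (min x y) ≠ f (max x y) := by
  rcases le_total x y with hxy | hyx
  · rwa [min_eq_left hxy, max_eq_right hxy]
  · rwa [min_eq_right hyx, max_eq_left hyx, ne_comm]

theorem stmt2_general (n : ℕ) (π : Equiv.Perm ℕ)
    (hπ : ∀ k ∈ Finset.Icc 1 (n+1), π k ∈ Finset.Icc 1 (n+1))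
    (i : ℕ) (hi : i ∈ Finset.Icc 1 n) :
    Odd ((Finset.Icc 1 n).filter (fun j => IsBox (⇑π) (⇑π.symm) i j)).card ∧
    1 ≤ ((Finset.Icc 1 n).filter (fun j => IsBox (⇑π) (⇑π.symm) i j)).card := by
  simp only [mem_Icc] at hi
  have hπi := mem_Icc.mp (hπ i (mem_Icc.mpr ⟨by omega, by omega⟩))
  have hπi' := mem_Icc.mp (hπ (i + 1) (mem_Icc.mpr ⟨by omega, by omega⟩))
  set f : ℕ → Bool := fun j => decide (π.symm j ≤ i)
  have hrow : {j ∈ Icc 1 n | IsBox π π.symm i j} =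
      {j ∈ Ico (min (π i) (π (i + 1))) (max (π i) (π (i + 1))) | f j ≠ f (j + 1)} := by
    ext j
    simp only [mem_filter, isBox_iff π.symm.injective, mem_Icc, mem_Ico]
    exact ⟨fun h => h.2, fun h => ⟨⟨by omega, by omega⟩, h⟩⟩
  have hodd : Odd #{j ∈ Icc 1 n | IsBox π π.symm i j} := by
    rw [hrow, odd_card_filter_ne_succ_iff f min_le_max]
    exact apply_min_ne_apply_max (by simp [f])
  exact ⟨hodd, hodd.pos⟩

theorem stmt2 (n : ℕ) (hn : 1 ≤ n) (π : Equiv.Perm ℕ)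
    (hπ : ∀ k ∈ Finset.Icc 1 (n+1), π k ∈ Finset.Icc 1 (n+1))
    (i : ℕ) (hi : i ∈ Finset.Icc 1 n) :
    Odd ((Finset.Icc 1 n).filter (fun j => IsBox (⇑π) (⇑π.symm) i j)).card ∧
    1 ≤ ((Finset.Icc 1 n).filter (fun j => IsBox (⇑π) (⇑π.symm) i j)).card :=
  stmt2_general n π hπ i hi
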